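/- arXiv:2406.01802 — 3 statements merged into one kernel-verified Lean document; each statement's English description precedes it below -/
import Mathlib

section
/- Let ψ1 and ψ2 be functions defined on hybrid time domains, with dom ψ1 compact. Then the domain of their concatenation ψ = ψ1|ψ2, namely dom ψ = dom ψ1 ∪ (dom ψ2 + {(T,J)}) where (T,J) = max dom ψ1 and + denotes Minkowski sum, is also a hybrid time domain. -/
open MeasureTheory Set Metric

noncomputable section

/-- A hybrid time domain: a subset of `ℝ≥0 × ℕ` such that, for each `(T, J)` in it,
its intersection with `[0,T] × {0,…,J}` is a finite union `⋃_{j=0}^{J} [t_j, t_{j+1}] × {j}`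
for some nondecreasing finite sequence `0 = t_0 ≤ t_1 ≤ ⋯ ≤ t_{J+1} = T`. -/
def IsHybridTimeDomain (E : Set (ℝ × ℕ)) : Prop :=
  (∀ p ∈ E, 0 ≤ p.1) ∧
  ∀ p ∈ E, ∃ t : ℕ → ℝ, t 0 = 0 ∧ t (p.2 + 1) = p.1 ∧
    (∀ j, j ≤ p.2 → t j ≤ t (j + 1)) ∧
    E ∩ (Set.Icc (0 : ℝ) p.1 ×ˢ {j : ℕ | j ≤ p.2}) =
      ⋃ j ∈ Set.Iic p.2, Set.Icc (t j) (t (j + 1)) ×ˢ ({j} : Set ℕ)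

/-- `(T, J)` is the maximal element of the hybrid time domain `E`. -/
def IsMaxOfDomain (E : Set (ℝ × ℕ)) (T : ℝ) (J : ℕ) : Prop :=
  (T, J) ∈ E ∧ ∀ p ∈ E, p.1 ≤ T ∧ p.2 ≤ J

/-- The domain of the concatenation: `E1 ∪ (E2 + {(T, J)})` (Minkowski sum). -/
def ConcatDom (T : ℝ) (J : ℕ) (E1 E2 : Set (ℝ × ℕ)) : Set (ℝ × ℕ) :=
  E1 ∪ (fun p : ℝ × ℕ => (p.1 + T, p.2 + J)) '' E2

/-- `f` is the concatenation of `f2` to `f1` (with `(T, J) = max dom f1`):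
`f = f1` on `E1 \ {(T,J)}`, and `f (t + T, j + J) = f2 (t, j)` on `E2`. -/
def IsConcatOf {Y : Type*} (T : ℝ) (J : ℕ) (E1 E2 : Set (ℝ × ℕ))
    (f1 f2 f : ℝ × ℕ → Y) : Prop :=
  (∀ p ∈ E1, p ≠ (T, J) → f p = f1 p) ∧
  (∀ p ∈ E2, f (p.1 + T, p.2 + J) = f2 p)

/-- The `j`-th time slice `I^j_E = {t : (t, j) ∈ E}` of a hybrid time domain. -/
def Slice (E : Set (ℝ × ℕ)) (j : ℕ) : Set ℝ := {t : ℝ | (t, j) ∈ E}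

/-- `t ↦ υ (t, j)` is (Lebesgue) measurable on the slice `I^j_E`. -/
def MeasurableOnSlice {Y : Type*} [MeasurableSpace Y]
    (υ : ℝ × ℕ → Y) (E : Set (ℝ × ℕ)) (j : ℕ) : Prop :=
  Measurable ((Slice E j).restrict fun t => υ (t, j))

/-- `t ↦ υ (t, j)` is locally essentially bounded on the slice `I^j_E`: every point of the
slice has an open neighborhood on which the function is bounded almost everywhere. -/
def LocEssBddOnSlice {Y : Type*} [NormedAddCommGroup Y]
    (υ : ℝ × ℕ → Y) (E : Set (ℝ × ℕ)) (j : ℕ) : Prop :=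
  ∀ r ∈ Slice E j, ∃ U : Set ℝ, IsOpen U ∧ r ∈ U ∧ ∃ c : ℝ, 0 ≤ c ∧
    ∀ᵐ t ∂(volume : Measure ℝ), t ∈ U ∩ Slice E j → ‖υ (t, j)‖ ≤ c

/-- A hybrid input: defined on a hybrid time domain, with each slice function Lebesgue
measurable and locally essentially bounded. -/
def IsHybridInput {Y : Type*} [MeasurableSpace Y] [NormedAddCommGroup Y]
    (υ : ℝ × ℕ → Y) (E : Set (ℝ × ℕ)) : Prop :=
  IsHybridTimeDomain E ∧
  ∀ j : ℕ, MeasurableOnSlice υ E j ∧ LocEssBddOnSlice υ E j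

/-- `f` is absolutely continuous on `[a, b]` in the ε–δ sense: for every `ε > 0` there is
`δ > 0` such that every countable collection of disjoint subintervals `[u k, v k]` of `[a,b]`
of total length at most `δ` satisfies `Σ ‖f (v k) - f (u k)‖ ≤ ε`. -/
def AbsContOnIcc {Y : Type*} [NormedAddCommGroup Y] (f : ℝ → Y) (a b : ℝ) : Prop :=
  ∀ ε > (0 : ℝ), ∃ δ > (0 : ℝ), ∀ u v : ℕ → ℝ,
    (∀ k, a ≤ u k ∧ u k ≤ v k ∧ v k ≤ b) →
    (Pairwise fun k l => Disjoint (Set.Ioo (u k) (v k)) (Set.Ioo (u l) (v l))) →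
    (∀ s : Finset ℕ, ∑ k ∈ s, (v k - u k) ≤ δ) →
    ∀ s : Finset ℕ, ∑ k ∈ s, ‖f (v k) - f (u k)‖ ≤ ε

/-- `f` is locally absolutely continuous on the set `I`: it is absolutely continuous on
every compact subinterval of `I`. -/
def LocAbsContOn {Y : Type*} [NormedAddCommGroup Y] (f : ℝ → Y) (I : Set ℝ) : Prop :=
  ∀ a b : ℝ, a ≤ b → Set.Icc a b ⊆ I → AbsContOnIcc f a b

/-- A hybrid arc: defined on a hybrid time domain, with each slice function locally
absolutely continuous. -/
def IsHybridArc {Y : Type*} [NormedAddCommGroup Y]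
    (φ : ℝ × ℕ → Y) (E : Set (ℝ × ℕ)) : Prop :=
  IsHybridTimeDomain E ∧
  ∀ j : ℕ, LocAbsContOn (fun t => φ (t, j)) (Slice E j)

/-- `(φ, υ)` with common domain `E` is a solution pair to the hybrid system
`H = (C, f, D, g)`. -/
def IsSolutionPair {X U : Type*} [NormedAddCommGroup X] [NormedSpace ℝ X]
    [NormedAddCommGroup U] [MeasurableSpace U]
    (C : Set (X × U)) (f : X × U → X) (D : Set (X × U)) (g : X × U → X)
    (φ : ℝ × ℕ → X) (υ : ℝ × ℕ → U) (E : Set (ℝ × ℕ)) : Prop :=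
  IsHybridArc φ E ∧ IsHybridInput υ E ∧
  (φ (0, 0), υ (0, 0)) ∈ closure C ∪ D ∧
  (∀ j : ℕ, (interior (Slice E j)).Nonempty →
    (∀ t ∈ interior (Slice E j), (φ (t, j), υ (t, j)) ∈ C) ∧
    ∀ᵐ t ∂(volume : Measure ℝ), t ∈ Slice E j →
      HasDerivAt (fun s => φ (s, j)) (f (φ (t, j), υ (t, j))) t) ∧
  ∀ (t : ℝ) (j : ℕ), (t, j) ∈ E → (t, j + 1) ∈ E →
    (φ (t, j), υ (t, j)) ∈ D ∧ φ (t, j + 1) = g (φ (t, j), υ (t, j))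

/-- `(φ, υ)` with domain `E` is a motion plan to the motion planning problem
`P = (X0, Xf, Xu, (C, f, D, g))`. -/
def IsMotionPlan {X U : Type*} [NormedAddCommGroup X] [NormedSpace ℝ X]
    [NormedAddCommGroup U] [MeasurableSpace U]
    (X0 Xf : Set X) (Xu : Set (X × U))
    (C : Set (X × U)) (f : X × U → X) (D : Set (X × U)) (g : X × U → X)
    (φ : ℝ × ℕ → X) (υ : ℝ × ℕ → U) (E : Set (ℝ × ℕ)) : Prop :=
  IsSolutionPair C f D g φ υ E ∧ φ (0, 0) ∈ X0 ∧
  ∃ (T : ℝ) (J : ℕ), (T, J) ∈ E ∧ φ (T, J) ∈ Xf ∧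
    ∀ (t : ℝ) (j : ℕ), (t, j) ∈ E → t + (j : ℝ) ≤ T + (J : ℝ) →
      (φ (t, j), υ (t, j)) ∉ Xu

/-- Truncation of a hybrid time domain up to hybrid time `(T, J)`. -/
def TruncDom (E : Set (ℝ × ℕ)) (T : ℝ) (J : ℕ) : Set (ℝ × ℕ) :=
  E ∩ (Set.Icc (0 : ℝ) T ×ˢ {j : ℕ | j ≤ J})

/-- The `δ`-inflation of a set `S ⊆ X × U`:
`{(x,u) : ∃ (y,v) ∈ S, x ∈ y + δB, u ∈ v + δB}` with `B` the closed unit ball. -/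
def Inflate {X U : Type*} [NormedAddCommGroup X] [NormedAddCommGroup U]
    (S : Set (X × U)) (δ : ℝ) : Set (X × U) :=
  {p | ∃ q ∈ S, ‖p.1 - q.1‖ ≤ δ ∧ ‖p.2 - q.2‖ ≤ δ}

/-- `δs` is a safety clearance of the motion plan `(φ, υ)` (with `(T,J) = max dom`). -/
def HasSafetyClearance {X U : Type*} [NormedAddCommGroup X] [NormedAddCommGroup U]
    (X0 Xf : Set X) (Xu : Set (X × U))
    (φ : ℝ × ℕ → X) (υ : ℝ × ℕ → U) (E : Set (ℝ × ℕ)) (T : ℝ) (J : ℕ)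
    (δs : ℝ) : Prop :=
  0 < δs ∧ ∀ δ' ∈ Set.Icc (0 : ℝ) δs,
    closedBall (φ (0, 0)) δ' ⊆ X0 ∧
    closedBall (φ (T, J)) δ' ⊆ Xf ∧
    ∀ p ∈ E, Disjoint (closedBall (φ p) δ' ×ˢ closedBall (υ p) δ') Xu

/-- `δd` is a dynamics clearance of the motion plan `(φ, υ)` relative to flow set `C`
and jump set `D`. -/
def HasDynamicsClearance {X U : Type*} [NormedAddCommGroup X] [NormedAddCommGroup U]
    (C D : Set (X × U))
    (φ : ℝ × ℕ → X) (υ : ℝ × ℕ → U) (E : Set (ℝ × ℕ)) (δd : ℝ) : Prop :=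
  0 < δd ∧ ∀ δ' ∈ Set.Icc (0 : ℝ) δd,
    (∀ p ∈ E, (interior (Slice E p.2)).Nonempty →
      closedBall (φ p) δ' ×ˢ closedBall (υ p) δ' ⊆ C) ∧
    ∀ p : ℝ × ℕ, p ∈ E → (p.1, p.2 + 1) ∈ E →
      closedBall (φ p) δ' ×ˢ closedBall (υ p) δ' ⊆ D

/-- The hybrid time domain `E` is purely continuous: nontrivial and contained in `ℝ≥0 × {0}`. -/
def IsPurelyContinuous (E : Set (ℝ × ℕ)) : Prop :=
  E.Nontrivial ∧ E ⊆ {p : ℝ × ℕ | p.2 = 0}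

/-- The hybrid time domain `E` is purely discrete: nontrivial and contained in `{0} × ℕ`. -/
def IsPurelyDiscrete (E : Set (ℝ × ℕ)) : Prop :=
  E.Nontrivial ∧ E ⊆ {p : ℝ × ℕ | p.1 = 0}

/-- Two hybrid arcs are `(τ, ε)`-close. -/
def CloseArcs {Y : Type*} [NormedAddCommGroup Y] (τ ε : ℝ)
    (φ1 : ℝ × ℕ → Y) (E1 : Set (ℝ × ℕ)) (φ2 : ℝ × ℕ → Y) (E2 : Set (ℝ × ℕ)) : Prop :=
  (∀ p ∈ E1, p.1 + (p.2 : ℝ) ≤ τ →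
    ∃ s : ℝ, (s, p.2) ∈ E2 ∧ |p.1 - s| < ε ∧ ‖φ1 p - φ2 (s, p.2)‖ < ε) ∧
  (∀ p ∈ E2, p.1 + (p.2 : ℝ) ≤ τ →
    ∃ s : ℝ, (s, p.2) ∈ E1 ∧ |p.1 - s| < ε ∧ ‖φ2 p - φ1 (s, p.2)‖ < ε)

/-! At a point of `E1` the truncation of the concatenated domain is that of `E1`: the shifted
copy of `E2` meets `[0, T] × {0, …, J}` only in `(T, J)`, which already lies in `E1`. At a
shifted point `(s + T, j + J)` the truncation is all of `E1` (which equals its truncation at the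
maximum `(T, J)`) together with the shifted truncation of `E2` at `(s, j)`, so the two interval
sequences splice: the last interval `[t1 J, T]` of `E1` and the first interval `T + [0, t2 1]`
of the shifted `E2` merge into the single interval `[t1 J, T + t2 1]` at jump index `J`. -/

def hybridIntervals (t : ℕ → ℝ) (J : ℕ) : Set (ℝ × ℕ) :=
  ⋃ j ∈ Set.Iic J, Set.Icc (t j) (t (j + 1)) ×ˢ ({j} : Set ℕ)

def hybridShift (T : ℝ) (J : ℕ) (p : ℝ × ℕ) : ℝ × ℕ := (p.1 + T, p.2 + J)

def IsHybridDecomposition (S : Set (ℝ × ℕ)) (T : ℝ) (J : ℕ) (t : ℕ → ℝ) : Prop :=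
  t 0 = 0 ∧ t (J + 1) = T ∧ (∀ j, j ≤ J → t j ≤ t (j + 1)) ∧ S = hybridIntervals t J

def spliceTimes (t1 t2 : ℕ → ℝ) (T : ℝ) (J : ℕ) (m : ℕ) : ℝ :=
  if m ≤ J then t1 m else T + t2 (m - J)

theorem isHybridTimeDomain_iff {E : Set (ℝ × ℕ)} :
    IsHybridTimeDomain E ↔
      (∀ p ∈ E, 0 ≤ p.1) ∧ ∀ p ∈ E, ∃ t, IsHybridDecomposition (TruncDom E p.1 p.2) p.1 p.2 t :=
  Iff.rfl

theorem concatDom_eq (T : ℝ) (J : ℕ) (E1 E2 : Set (ℝ × ℕ)) :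
    ConcatDom T J E1 E2 = E1 ∪ hybridShift T J '' E2 :=
  rfl

theorem mem_truncDom {E : Set (ℝ × ℕ)} {T : ℝ} {J : ℕ} {x : ℝ × ℕ} :
    x ∈ TruncDom E T J ↔ x ∈ E ∧ 0 ≤ x.1 ∧ x.1 ≤ T ∧ x.2 ≤ J := by
  simp [TruncDom, and_assoc]

theorem mem_hybridIntervals {t : ℕ → ℝ} {J : ℕ} {x : ℝ × ℕ} :
    x ∈ hybridIntervals t J ↔ x.2 ≤ J ∧ t x.2 ≤ x.1 ∧ x.1 ≤ t (x.2 + 1) := by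
  simp only [hybridIntervals, Set.mem_iUnion, Set.mem_prod, Set.mem_singleton_iff, Set.mem_Icc,
    Set.mem_Iic, exists_prop]
  constructor
  · rintro ⟨j, hj, hx, rfl⟩
    exact ⟨hj, hx⟩
  · rintro ⟨hj, hx⟩
    exact ⟨_, hj, hx, rfl⟩

theorem mem_image_hybridShift {T : ℝ} {J : ℕ} {S : Set (ℝ × ℕ)} {x : ℝ × ℕ} :
    x ∈ hybridShift T J '' S ↔ J ≤ x.2 ∧ (x.1 - T, x.2 - J) ∈ S := by
  constructor
  · rintro ⟨y, hy, rfl⟩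
    simpa [hybridShift] using hy
  · rintro ⟨hJ, hx⟩
    refine ⟨_, hx, Prod.ext ?_ ?_⟩ <;> simp only [hybridShift] <;> [ring; omega]

theorem truncDom_concatDom_of_mem_left {E1 E2 : Set (ℝ × ℕ)} {T : ℝ} {J : ℕ}
    (h2 : ∀ q ∈ E2, 0 ≤ q.1) (hmax : IsMaxOfDomain E1 T J) {p : ℝ × ℕ} (hp : p ∈ E1) :
    TruncDom (ConcatDom T J E1 E2) p.1 p.2 = TruncDom E1 p.1 p.2 := by
  obtain ⟨hTJ, hle⟩ := hmax
  obtain ⟨hpT, hpJ⟩ := hle p hp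
  ext x
  simp only [mem_truncDom, concatDom_eq, Set.mem_union, mem_image_hybridShift]
  refine ⟨fun ⟨hx, hbox⟩ => ⟨?_, hbox⟩, fun ⟨hx, hbox⟩ => ⟨.inl hx, hbox⟩⟩
  rcases hx with hx | ⟨hJx, hx⟩
  · exact hx
  · -- a shifted point inside the box `[0, T] × {0, …, J}` can only be `(T, J)`
    have hxT : x.1 = T := by linarith [h2 _ hx]
    have hxJ : x.2 = J := by omega
    rwa [← Prod.mk.eta (p := x), hxT, hxJ]

theorem truncDom_concatDom_of_mem_right {E1 E2 : Set (ℝ × ℕ)} {T : ℝ} {J : ℕ}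
    (h1 : ∀ p ∈ E1, 0 ≤ p.1) (h2 : ∀ q ∈ E2, 0 ≤ q.1) (hmax : IsMaxOfDomain E1 T J)
    {q : ℝ × ℕ} (hq : q ∈ E2) :
    TruncDom (ConcatDom T J E1 E2) (q.1 + T) (q.2 + J) =
      TruncDom E1 T J ∪ hybridShift T J '' TruncDom E2 q.1 q.2 := by
  have hT : 0 ≤ T := h1 _ hmax.1
  have hq1 : 0 ≤ q.1 := h2 q hq
  ext x
  simp only [mem_truncDom, concatDom_eq, Set.mem_union, mem_image_hybridShift]
  constructor
  · rintro ⟨hx | ⟨hJ, hx⟩, h0, hs, hj⟩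
    · exact .inl ⟨hx, h0, hmax.2 x hx⟩
    · exact .inr ⟨hJ, hx, h2 _ hx, by linarith, by omega⟩
  · rintro (⟨hx, h0, hxT, hxJ⟩ | ⟨hJ, hx, h0, hs, hj⟩)
    · exact ⟨.inl hx, h0, by linarith, by omega⟩
    · exact ⟨.inr ⟨hJ, hx⟩, by linarith, by linarith, by omega⟩

theorem hybridIntervals_splice {t1 t2 : ℕ → ℝ} {T : ℝ} {J : ℕ} (j : ℕ)
    (h1J : t1 J ≤ T) (h1end : t1 (J + 1) = T) (h20 : t2 0 = 0) (h21 : 0 ≤ t2 1) :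
    hybridIntervals t1 J ∪ hybridShift T J '' hybridIntervals t2 j =
      hybridIntervals (spliceTimes t1 t2 T J) (j + J) := by
  ext ⟨a, k⟩
  simp only [Set.mem_union, mem_hybridIntervals, mem_image_hybridShift, spliceTimes]
  rcases lt_trichotomy k J with hk | rfl | hk
  · simp only [hk.le, true_and, not_le_of_gt hk, Nat.sub_eq_zero_of_le, zero_le, zero_add,
      tsub_le_iff_right, false_and, or_false, ↓reduceIte, Nat.succ_le_of_lt hk, iff_and_self,
      and_imp]
    exact fun _ _ => by omega
  · simp only [le_refl, h1end, true_and, tsub_self, zero_le, h20, sub_nonneg, zero_add,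
      tsub_le_iff_right, le_add_iff_nonneg_left, ↓reduceIte, add_le_iff_nonpos_right,
      nonpos_iff_eq_zero, one_ne_zero, add_tsub_cancel_left]
    constructor
    · rintro (⟨h, h'⟩ | ⟨h, h'⟩) <;> constructor <;> linarith
    · rintro ⟨h, h'⟩
      rcases le_total a T with haT | haT
      · exact .inl ⟨h, haT⟩
      · exact .inr ⟨haT, by linarith⟩
  · simp only [not_le_of_gt hk, false_and, tsub_le_iff_right, false_or, ↓reduceIte,
      Order.add_one_le_iff, show ¬k < J by omega, show k + 1 - J = k - J + 1 by omega]
    constructor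
    · rintro ⟨-, hkj, h, h'⟩
      exact ⟨hkj, by linarith, by linarith⟩
    · rintro ⟨hkj, h, h'⟩
      exact ⟨hk.le, hkj, by linarith, by linarith⟩

theorem IsHybridDecomposition.splice {S1 S2 : Set (ℝ × ℕ)} {T s : ℝ} {J j : ℕ}
    {t1 t2 : ℕ → ℝ} (d1 : IsHybridDecomposition S1 T J t1)
    (d2 : IsHybridDecomposition S2 s j t2) :
    IsHybridDecomposition (S1 ∪ hybridShift T J '' S2) (s + T) (j + J)
      (spliceTimes t1 t2 T J) := by
  obtain ⟨h10, h1end, h1mono, rfl⟩ := d1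
  obtain ⟨h20, h2end, h2mono, rfl⟩ := d2
  have hJ : t1 J ≤ T := h1end ▸ h1mono J le_rfl
  have h21 : 0 ≤ t2 1 := h20 ▸ h2mono 0 (Nat.zero_le j)
  refine ⟨by simp [spliceTimes, h10], ?_, ?_, hybridIntervals_splice j hJ h1end h20 h21⟩
  · rw [spliceTimes, if_neg (by omega), show j + J + 1 - J = j + 1 by omega, h2end, add_comm]
  · intro m hm
    rcases lt_trichotomy m J with hmJ | rfl | hmJ
    · rw [spliceTimes, spliceTimes, if_pos hmJ.le, if_pos (Nat.succ_le_of_lt hmJ)]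
      exact h1mono m hmJ.le
    · rw [spliceTimes, spliceTimes, if_pos le_rfl, if_neg (Nat.not_succ_le_self m),
        Nat.add_sub_cancel_left]
      linarith
    · rw [spliceTimes, spliceTimes, if_neg (by omega), if_neg (by omega),
        show m + 1 - J = m - J + 1 by omega]
      linarith [h2mono (m - J) (by omega)]

theorem concatDom_isHybridTimeDomain_general
    {E1 E2 : Set (ℝ × ℕ)}
    (h1 : IsHybridTimeDomain E1) (h2 : IsHybridTimeDomain E2)
    {T : ℝ} {J : ℕ} (hmax : IsMaxOfDomain E1 T J) :
    IsHybridTimeDomain (ConcatDom T J E1 E2) := by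
  rw [isHybridTimeDomain_iff] at h1 h2 ⊢
  refine ⟨?_, ?_⟩
  · rintro p (hp | ⟨q, hq, rfl⟩)
    · exact h1.1 p hp
    · exact add_nonneg (h2.1 q hq) (h1.1 _ hmax.1)
  rintro p (hp | ⟨q, hq, rfl⟩)
  · obtain ⟨t, ht⟩ := h1.2 p hp
    exact ⟨t, by rwa [truncDom_concatDom_of_mem_left h2.1 hmax hp]⟩
  · obtain ⟨t1, ht1⟩ := h1.2 _ hmax.1
    obtain ⟨t2, ht2⟩ := h2.2 q hq
    refine ⟨spliceTimes t1 t2 T J, ?_⟩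
    rw [truncDom_concatDom_of_mem_right h1.1 h2.1 hmax hq]
    exact ht1.splice ht2

/-- the domain of the concatenation of two functions defined on hybrid time
domains (the first compact) is again a hybrid time domain. -/
theorem concatDom_isHybridTimeDomain
    {E1 E2 : Set (ℝ × ℕ)}
    (h1 : IsHybridTimeDomain E1) (h2 : IsHybridTimeDomain E2)
    (hcompact : IsCompact E1)
    {T : ℝ} {J : ℕ} (hmax : IsMaxOfDomain E1 T J) :
    IsHybridTimeDomain (ConcatDom T J E1 E2) :=
  concatDom_isHybridTimeDomain_general h1 h2 hmax
end
end

section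
/- Let ψ1 = (φ1,υ1) and ψ2 = (φ2,υ2) be solution pairs to a hybrid system H = (C,f,D,g) with dom ψ1 compact, and suppose ψ2(0,0) ∈ C whenever both I^J_{ψ1} := {t : (t,J) ∈ dom ψ1} and I^0_{ψ2} := {t : (t,0) ∈ dom ψ2} have nonempty interior, where (T,J) = max dom ψ1. Then the concatenation ψ = (φ,υ) = (φ1|φ2, υ1|υ2) satisfies: for each j ∈ ℕ such that I^j_ψ := {t : (t,j) ∈ dom ψ} has nonempty interior, (φ(t,j),υ(t,j)) ∈ C for all t in the interior of I^j_ψ. -/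
open MeasureTheory Set Metric

noncomputable section

/-! At a level `j ≠ J` the slice of the concatenated domain is a slice of `E1` (for `j < J`) or a
shifted slice of `E2` (for `j > J`). At level `J` it is the union of `Slice E1 J ⊆ (-∞, T]` and
`T + Slice E2 0 ⊆ [T, ∞)`, so an interior point `t ≠ T` is interior to one of the two pieces. The
point `T` itself is interior only if both pieces have nonempty interior, and then
`ψ (T, J) = ψ2 (0, 0) ∈ C` by hypothesis. -/

theorem interior_union_inter_subset_left {X : Type*} [TopologicalSpace X] {A B V : Set X}
    (hV : IsOpen V) (hBV : Disjoint B V) : interior (A ∪ B) ∩ V ⊆ interior A :=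
  interior_maximal
    (fun _ ⟨hx, hxV⟩ => (interior_subset hx).resolve_right fun hxB => disjoint_left.1 hBV hxB hxV)
    (isOpen_interior.inter hV)

theorem interior_preimage_sub_const {G : Type*} [TopologicalSpace G] [AddGroup G]
    [IsTopologicalAddGroup G] (a : G) (S : Set G) :
    interior ((· - a) ⁻¹' S) = (· - a) ⁻¹' interior S :=
  ((Homeomorph.subRight a).preimage_interior S).symm

theorem IsHybridTimeDomain.zero_mem {E : Set (ℝ × ℕ)} (hE : IsHybridTimeDomain E)
    (hne : E.Nonempty) : ((0 : ℝ), 0) ∈ E := by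
  obtain ⟨p, hp⟩ := hne
  obtain ⟨t, ht0, -, hmono, hEq⟩ := hE.2 p hp
  have h0 : ((0 : ℝ), 0) ∈ ⋃ j ∈ Iic p.2, Icc (t j) (t (j + 1)) ×ˢ ({j} : Set ℕ) :=
    mem_biUnion (Nat.zero_le p.2)
      ⟨by rw [← ht0]; exact left_mem_Icc.2 (hmono 0 (Nat.zero_le _)), rfl⟩
  exact (hEq ▸ h0).1

theorem IsSolutionPair.mem_of_mem_interior_slice {X U : Type*} [NormedAddCommGroup X]
    [NormedSpace ℝ X] [NormedAddCommGroup U] [MeasurableSpace U] {C D : Set (X × U)}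
    {f g : X × U → X} {φ : ℝ × ℕ → X} {υ : ℝ × ℕ → U} {E : Set (ℝ × ℕ)}
    (h : IsSolutionPair C f D g φ υ E) {t : ℝ} {j : ℕ} (ht : t ∈ interior (Slice E j)) :
    (φ (t, j), υ (t, j)) ∈ C :=
  (h.2.2.2.1 j ⟨t, ht⟩).1 t ht

theorem IsMaxOfDomain.slice_subset_Iic {E : Set (ℝ × ℕ)} {T : ℝ} {J : ℕ}
    (hmax : IsMaxOfDomain E T J) (j : ℕ) : Slice E j ⊆ Iic T :=
  fun _ ht => (hmax.2 _ ht).1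

theorem IsMaxOfDomain.slice_eq_empty {E : Set (ℝ × ℕ)} {T : ℝ} {J : ℕ}
    (hmax : IsMaxOfDomain E T J) {j : ℕ} (hj : J < j) : Slice E j = ∅ :=
  eq_empty_of_forall_notMem fun _ ht => hj.not_ge (hmax.2 _ ht).2

section Concat

variable {T : ℝ} {J : ℕ} {E1 E2 : Set (ℝ × ℕ)}

theorem slice_concatDom_of_lt {j : ℕ} (hj : j < J) :
    Slice (ConcatDom T J E1 E2) j = Slice E1 j := by
  ext t
  simp only [Slice, ConcatDom, mem_ofPred_eq, mem_union, mem_image, Prod.ext_iff,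
    or_iff_left_iff_imp]
  rintro ⟨p, -, -, hp⟩
  omega

theorem slice_concatDom_of_le {j : ℕ} (hj : J ≤ j) :
    Slice (ConcatDom T J E1 E2) j = Slice E1 j ∪ (· - T) ⁻¹' Slice E2 (j - J) := by
  ext t
  simp only [Slice, ConcatDom, mem_ofPred_eq, mem_union, mem_image, mem_preimage, Prod.ext_iff]
  refine or_congr_right ⟨?_, fun h => ⟨_, h, sub_add_cancel t T, Nat.sub_add_cancel hj⟩⟩
  rintro ⟨p, hp, rfl, rfl⟩
  simpa using hp

theorem IsConcatOf.apply_of_le {Y : Type*} {f1 f2 f : ℝ × ℕ → Y}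
    (hf : IsConcatOf T J E1 E2 f1 f2 f) {t : ℝ} {j : ℕ} (hj : J ≤ j)
    (ht : t - T ∈ Slice E2 (j - J)) : f (t, j) = f2 (t - T, j - J) := by
  simpa [Nat.sub_add_cancel hj] using hf.2 _ ht

theorem IsConcatOf.apply_max {Y : Type*} {f1 f2 f : ℝ × ℕ → Y}
    (hf : IsConcatOf T J E1 E2 f1 f2 f) (h0 : ((0 : ℝ), 0) ∈ E2) : f (T, J) = f2 (0, 0) := by
  simpa using hf.2 _ h0

variable {X U : Type*} [NormedAddCommGroup X] [NormedSpace ℝ X] [NormedAddCommGroup U]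
  [MeasurableSpace U] {C D : Set (X × U)} {f g : X × U → X} {φ1 φ2 φ : ℝ × ℕ → X}
  {υ1 υ2 υ : ℝ × ℕ → U}

theorem concat_mem_of_mem_interior_slice_left (h1 : IsSolutionPair C f D g φ1 υ1 E1)
    (hφ : IsConcatOf T J E1 E2 φ1 φ2 φ) (hυ : IsConcatOf T J E1 E2 υ1 υ2 υ) {t : ℝ} {j : ℕ}
    (ht : t ∈ interior (Slice E1 j)) (hne : (t, j) ≠ (T, J)) : (φ (t, j), υ (t, j)) ∈ C := by
  have hmem : t ∈ Slice E1 j := interior_subset ht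
  rw [hφ.1 _ hmem hne, hυ.1 _ hmem hne]
  exact h1.mem_of_mem_interior_slice ht

theorem concat_mem_of_mem_interior_slice_right (h2 : IsSolutionPair C f D g φ2 υ2 E2)
    (hφ : IsConcatOf T J E1 E2 φ1 φ2 φ) (hυ : IsConcatOf T J E1 E2 υ1 υ2 υ) {t : ℝ} {j : ℕ}
    (hj : J ≤ j) (ht : t ∈ interior ((· - T) ⁻¹' Slice E2 (j - J))) :
    (φ (t, j), υ (t, j)) ∈ C := by
  rw [interior_preimage_sub_const] at ht
  rw [hφ.apply_of_le hj (interior_subset ht), hυ.apply_of_le hj (interior_subset ht)]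
  exact h2.mem_of_mem_interior_slice ht

theorem concat_mem_of_mem_interior_slice_concatDom_max
    (h1 : IsSolutionPair C f D g φ1 υ1 E1) (h2 : IsSolutionPair C f D g φ2 υ2 E2)
    (hmax : IsMaxOfDomain E1 T J)
    (hC : (interior (Slice E1 J)).Nonempty → (interior (Slice E2 0)).Nonempty →
      (φ2 (0, 0), υ2 (0, 0)) ∈ C)
    (hφ : IsConcatOf T J E1 E2 φ1 φ2 φ) (hυ : IsConcatOf T J E1 E2 υ1 υ2 υ) {t : ℝ}
    (ht : t ∈ interior (Slice (ConcatDom T J E1 E2) J)) : (φ (t, J), υ (t, J)) ∈ C := by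
  have hE2 : IsHybridTimeDomain E2 := h2.1.1
  rw [slice_concatDom_of_le le_rfl] at ht
  set A := Slice E1 J
  set B := (· - T) ⁻¹' Slice E2 (J - J) with hB
  have hleft : interior (A ∪ B) ∩ Iio T ⊆ interior A :=
    interior_union_inter_subset_left isOpen_Iio <| disjoint_left.2 fun s hs hsT =>
      not_le_of_gt hsT (sub_nonneg.1 (hE2.1 _ hs))
  have hright : interior (A ∪ B) ∩ Ioi T ⊆ interior B := by
    rw [union_comm]
    exact interior_union_inter_subset_left isOpen_Ioi <| disjoint_left.2 fun s hs hsT =>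
      not_le_of_gt hsT (mem_Iic.1 (hmax.slice_subset_Iic J hs))
  rcases lt_trichotomy t T with htT | htT | htT
  · exact concat_mem_of_mem_interior_slice_left h1 hφ hυ (hleft ⟨ht, htT⟩)
      (by simp [htT.ne])
  · subst t
    have hnhds : ∀ᶠ s in nhds T, s ∈ interior (A ∪ B) := isOpen_interior.mem_nhds ht
    obtain ⟨s, hsT, hs⟩ := hnhds.exists_lt
    obtain ⟨s', hs'T, hs'⟩ := hnhds.exists_gt
    have hs'B := hright ⟨hs', hs'T⟩
    rw [hB, interior_preimage_sub_const, Nat.sub_self] at hs'B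
    have hmem : s' - T ∈ Slice E2 0 := interior_subset hs'B
    have h00 := hE2.zero_mem ⟨_, hmem⟩
    rw [hφ.apply_max h00, hυ.apply_max h00]
    exact hC ⟨s, hleft ⟨hs, hsT⟩⟩ ⟨_, hs'B⟩
  · exact concat_mem_of_mem_interior_slice_right h2 hφ hυ le_rfl (hright ⟨ht, htT⟩)

end Concat

theorem concat_solutionPair_flow_membership_general
    {n m : ℕ}
    {C D : Set (EuclideanSpace ℝ (Fin n) × EuclideanSpace ℝ (Fin m))}
    {f g : EuclideanSpace ℝ (Fin n) × EuclideanSpace ℝ (Fin m) → EuclideanSpace ℝ (Fin n)}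
    {E1 E2 : Set (ℝ × ℕ)}
    {φ1 φ2 φ : ℝ × ℕ → EuclideanSpace ℝ (Fin n)}
    {υ1 υ2 υ : ℝ × ℕ → EuclideanSpace ℝ (Fin m)}
    (h1 : IsSolutionPair C f D g φ1 υ1 E1)
    (h2 : IsSolutionPair C f D g φ2 υ2 E2)
    {T : ℝ} {J : ℕ} (hmax : IsMaxOfDomain E1 T J)
    (hC : (interior (Slice E1 J)).Nonempty → (interior (Slice E2 0)).Nonempty →
      (φ2 (0, 0), υ2 (0, 0)) ∈ C)
    (hφ : IsConcatOf T J E1 E2 φ1 φ2 φ)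
    (hυ : IsConcatOf T J E1 E2 υ1 υ2 υ) :
    ∀ j : ℕ, (interior (Slice (ConcatDom T J E1 E2) j)).Nonempty →
      ∀ t ∈ interior (Slice (ConcatDom T J E1 E2) j), (φ (t, j), υ (t, j)) ∈ C := by
  intro j _ t ht
  rcases lt_trichotomy j J with hjJ | rfl | hJj
  · rw [slice_concatDom_of_lt hjJ] at ht
    exact concat_mem_of_mem_interior_slice_left h1 hφ hυ ht (by simp [hjJ.ne])
  · exact concat_mem_of_mem_interior_slice_concatDom_max h1 h2 hmax hC hφ hυ ht
  · rw [slice_concatDom_of_le hJj.le, hmax.slice_eq_empty hJj, empty_union] at ht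
    exact concat_mem_of_mem_interior_slice_right h2 hφ hυ hJj.le ht

/-- the concatenation of two solution pairs satisfies the flow-set membership
condition on the interior of every slice of its domain. -/
theorem concat_solutionPair_flow_membership
    {n m : ℕ}
    {C D : Set (EuclideanSpace ℝ (Fin n) × EuclideanSpace ℝ (Fin m))}
    {f g : EuclideanSpace ℝ (Fin n) × EuclideanSpace ℝ (Fin m) → EuclideanSpace ℝ (Fin n)}
    {E1 E2 : Set (ℝ × ℕ)}
    {φ1 φ2 φ : ℝ × ℕ → EuclideanSpace ℝ (Fin n)}
    {υ1 υ2 υ : ℝ × ℕ → EuclideanSpace ℝ (Fin m)}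
    (h1 : IsSolutionPair C f D g φ1 υ1 E1)
    (h2 : IsSolutionPair C f D g φ2 υ2 E2)
    (hcompact : IsCompact E1)
    {T : ℝ} {J : ℕ} (hmax : IsMaxOfDomain E1 T J)
    (hC : (interior (Slice E1 J)).Nonempty → (interior (Slice E2 0)).Nonempty →
      (φ2 (0, 0), υ2 (0, 0)) ∈ C)
    (hφ : IsConcatOf T J E1 E2 φ1 φ2 φ)
    (hυ : IsConcatOf T J E1 E2 υ1 υ2 υ) :
    ∀ j : ℕ, (interior (Slice (ConcatDom T J E1 E2) j)).Nonempty →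
      ∀ t ∈ interior (Slice (ConcatDom T J E1 E2) j), (φ (t, j), υ (t, j)) ∈ C :=
  concat_solutionPair_flow_membership_general h1 h2 hmax hC hφ hυ
end
end

section
/- Let ψ1 = (φ1,υ1) and ψ2 = (φ2,υ2) be solution pairs to a hybrid system H = (C,f,D,g) with dom ψ1 compact. Then the concatenation ψ = (φ,υ) = (φ1|φ2, υ1|υ2) satisfies: for each j ∈ ℕ such that I^j_ψ := {t : (t,j) ∈ dom ψ} has nonempty interior, (d/dt)φ(t,j) = f(φ(t,j),υ(t,j)) for almost all t ∈ I^j_ψ. -/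
open MeasureTheory Set Metric

noncomputable section

/-!
Slices of a hybrid time domain are intervals, so almost every point of a slice is an interior
point. Near such a point (other than the junction time `T`) the concatenation coincides with
`φ1`, or with `φ2` shifted by `T` in time, and the flow equation passes from the piece to `φ`.
-/

open Filter Topology

/-- The decomposition at `(t₂, j)` puts every `(t, j) ∈ E` with `t ≤ t₂` into the one
interval `[t_j, t₂] × {j}`. -/
lemma IsHybridTimeDomain.ordConnected_slice {E : Set (ℝ × ℕ)} (hE : IsHybridTimeDomain E)
    (j : ℕ) : (Slice E j).OrdConnected := by
  refine ⟨fun t₁ h₁ t₂ h₂ z hz => ?_⟩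
  obtain ⟨t, -, ht_end, -, hdecomp⟩ := hE.2 (t₂, j) h₂
  have h₁' : (t₁, j) ∈ E ∩ (Icc 0 t₂ ×ˢ {k : ℕ | k ≤ j}) :=
    ⟨h₁, ⟨hE.1 _ h₁, hz.1.trans hz.2⟩, le_refl j⟩
  rw [hdecomp] at h₁'
  simp only [mem_iUnion, mem_prod, mem_singleton_iff, mem_Iic] at h₁'
  obtain ⟨k, -, ht₁, rfl⟩ := h₁'
  have hz' : (z, j) ∈ E ∩ (Icc 0 t₂ ×ˢ {i : ℕ | i ≤ j}) := by
    rw [hdecomp]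
    simp only [mem_iUnion, mem_prod, mem_singleton_iff, mem_Iic]
    exact ⟨j, le_rfl, ⟨ht₁.1.trans hz.1, hz.2.trans_eq ht_end.symm⟩, rfl⟩
  exact hz'.1

lemma Set.OrdConnected.ae_mem_nhds {S : Set ℝ} (hS : S.OrdConnected) :
    ∀ᵐ t, t ∈ S → S ∈ 𝓝 t := by
  have hnull : volume (frontier S) = 0 :=
    (convex_iff_ordConnected.2 hS).addHaar_frontier volume
  filter_upwards [measure_eq_zero_iff_ae_notMem.1 hnull] with t ht htS
  by_contra hnhds
  exact ht ⟨subset_closure htS, fun hint => hnhds (mem_interior_iff_mem_nhds.1 hint)⟩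

/-- A slice with empty interior is a null interval, so the flow condition, which the definition
imposes only on slices with nonempty interior, holds almost everywhere on every slice. -/
lemma IsSolutionPair.ae_mem_nhds_hasDerivAt {X U : Type*} [NormedAddCommGroup X]
    [NormedSpace ℝ X] [NormedAddCommGroup U] [MeasurableSpace U]
    {C D : Set (X × U)} {f g : X × U → X} {φ : ℝ × ℕ → X} {υ : ℝ × ℕ → U}
    {E : Set (ℝ × ℕ)} (h : IsSolutionPair C f D g φ υ E) (j : ℕ) :
    ∀ᵐ t, t ∈ Slice E j →
      Slice E j ∈ 𝓝 t ∧ HasDerivAt (fun s => φ (s, j)) (f (φ (t, j), υ (t, j))) t := by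
  have hnhds := (h.1.1.ordConnected_slice j).ae_mem_nhds
  by_cases hint : (interior (Slice E j)).Nonempty
  · filter_upwards [hnhds, (h.2.2.2.1 j hint).2] with t hnhds_t hderiv_t ht
    exact ⟨hnhds_t ht, hderiv_t ht⟩
  · filter_upwards [hnhds] with t hnhds_t ht
    exact absurd ⟨t, mem_interior_iff_mem_nhds.2 (hnhds_t ht)⟩ hint

lemma ae_hasDerivAt_of_eq_comp_sub {X U : Type*} [NormedAddCommGroup X] [NormedSpace ℝ X]
    {F : X × U → X} {S : Set ℝ} {ψ φ : ℝ → X} {w υ : ℝ → U} (c : ℝ)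
    (hψ : ∀ᵐ t, t ∈ S → S ∈ 𝓝 t ∧ HasDerivAt ψ (F (ψ t, w t)) t)
    (hφ : ∀ s ∈ S, φ (s + c) = ψ s) (hυ : ∀ s ∈ S, υ (s + c) = w s) :
    ∀ᵐ t, t - c ∈ S → HasDerivAt φ (F (φ t, υ t)) t := by
  filter_upwards [(measurePreserving_sub_right volume c).quasiMeasurePreserving.ae hψ]
    with t ht hmem
  obtain ⟨hnhds, hderiv⟩ := ht hmem
  have hφ_near : φ =ᶠ[𝓝 t] fun s => ψ (s - c) := by
    filter_upwards [(continuous_sub_right c).continuousAt.preimage_mem_nhds hnhds] with s hs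
    simpa using hφ _ hs
  have hφt : φ t = ψ (t - c) := by simpa using hφ _ hmem
  have hυt : υ t = w (t - c) := by simpa using hυ _ hmem
  rw [hφt, hυt]
  exact (hderiv.comp_sub_const t c).congr_of_eventuallyEq hφ_near

theorem concat_solutionPair_flow_ode_general
    {n m : ℕ}
    {C D : Set (EuclideanSpace ℝ (Fin n) × EuclideanSpace ℝ (Fin m))}
    {f g : EuclideanSpace ℝ (Fin n) × EuclideanSpace ℝ (Fin m) → EuclideanSpace ℝ (Fin n)}
    {E1 E2 : Set (ℝ × ℕ)}
    {φ1 φ2 φ : ℝ × ℕ → EuclideanSpace ℝ (Fin n)}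
    {υ1 υ2 υ : ℝ × ℕ → EuclideanSpace ℝ (Fin m)}
    (h1 : IsSolutionPair C f D g φ1 υ1 E1)
    (h2 : IsSolutionPair C f D g φ2 υ2 E2)
    {T : ℝ} {J : ℕ}
    (hφ : IsConcatOf T J E1 E2 φ1 φ2 φ)
    (hυ : IsConcatOf T J E1 E2 υ1 υ2 υ) :
    ∀ j : ℕ, (interior (Slice (ConcatDom T J E1 E2) j)).Nonempty →
      ∀ᵐ t ∂(volume : Measure ℝ), t ∈ Slice (ConcatDom T J E1 E2) j →
        HasDerivAt (fun s => φ (s, j)) (f (φ (t, j), υ (t, j))) t := by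
  intro j _
  have hne (s : ℝ) (hs : s ∈ Slice E1 j \ {T}) : (s, j) ≠ (T, J) :=
    fun h => hs.2 (congrArg Prod.fst h)
  have hfirst : ∀ᵐ t, t - 0 ∈ Slice E1 j \ {T} →
      HasDerivAt (fun s => φ (s, j)) (f (φ (t, j), υ (t, j))) t := by
    refine ae_hasDerivAt_of_eq_comp_sub 0 ?_ (fun s hs => by simpa using hφ.1 _ hs.1 (hne s hs))
      (fun s hs => by simpa using hυ.1 _ hs.1 (hne s hs))
    filter_upwards [h1.ae_mem_nhds_hasDerivAt j] with t ht ⟨htE, htT⟩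
    exact ⟨inter_mem (ht htE).1 (compl_singleton_mem_nhds htT), (ht htE).2⟩
  have hsecond : ∀ᵐ t, ∀ i, t - T ∈ Slice E2 i →
      HasDerivAt (fun s => φ (s, i + J)) (f (φ (t, i + J), υ (t, i + J))) t :=
    ae_all_iff.2 fun i => ae_hasDerivAt_of_eq_comp_sub T (h2.ae_mem_nhds_hasDerivAt i)
      (fun s hs => hφ.2 (s, i) hs) (fun s hs => hυ.2 (s, i) hs)
  filter_upwards [hfirst, hsecond, Measure.ae_ne volume T] with t hfirst_t hsecond_t htT ht
  rcases ht with ht | ⟨⟨s, i⟩, hs, hst⟩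
  · exact hfirst_t (by rw [sub_zero]; exact ⟨ht, htT⟩)
  · obtain ⟨rfl, rfl⟩ := Prod.mk.inj hst
    exact hsecond_t i (by rwa [add_sub_cancel_right])

/-- the concatenation of two solution pairs satisfies the flow differential
equation almost everywhere on every slice of its domain with nonempty interior. -/
theorem concat_solutionPair_flow_ode
    {n m : ℕ}
    {C D : Set (EuclideanSpace ℝ (Fin n) × EuclideanSpace ℝ (Fin m))}
    {f g : EuclideanSpace ℝ (Fin n) × EuclideanSpace ℝ (Fin m) → EuclideanSpace ℝ (Fin n)}
    {E1 E2 : Set (ℝ × ℕ)}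
    {φ1 φ2 φ : ℝ × ℕ → EuclideanSpace ℝ (Fin n)}
    {υ1 υ2 υ : ℝ × ℕ → EuclideanSpace ℝ (Fin m)}
    (h1 : IsSolutionPair C f D g φ1 υ1 E1)
    (h2 : IsSolutionPair C f D g φ2 υ2 E2)
    (hcompact : IsCompact E1)
    {T : ℝ} {J : ℕ} (hmax : IsMaxOfDomain E1 T J)
    (hφ : IsConcatOf T J E1 E2 φ1 φ2 φ)
    (hυ : IsConcatOf T J E1 E2 υ1 υ2 υ) :
    ∀ j : ℕ, (interior (Slice (ConcatDom T J E1 E2) j)).Nonempty →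
      ∀ᵐ t ∂(volume : Measure ℝ), t ∈ Slice (ConcatDom T J E1 E2) j →
        HasDerivAt (fun s => φ (s, j)) (f (φ (t, j), υ (t, j))) t :=
  concat_solutionPair_flow_ode_general h1 h2 hφ hυ
end
end
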